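/- Let γ=(γ1,γ2) be a weight, δ=γ1+γ2, let H be a quasi-homogeneous polynomial of generalized degree χ+δ (χ≥0), set 𝓗=(−∂H/∂x2, ∂H/∂x1), and let J be a quasi-homogeneous polynomial of g.d. k≥0 with 𝓗(J)=0. Then [𝓗, J·E_γ] = −χ·J·𝓗, i.e., the quasi-homogeneous polynomial K of g.d. k+χ+δ with [𝓗, J·E_γ]=(−∂K/∂x2, ∂K/∂x1) satisfies (−∂K/∂x2, ∂K/∂x1) = −χ·J·𝓗, and moreover 𝓗(K)=0. -/

import Mathlib

open MvPolynomial

/-- A planar polynomial vector field `P = (P1, P2)` applied to a polynomial `f`: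
`P(f) = P1·∂f/∂x1 + P2·∂f/∂x2`. -/
noncomputable def applyVF (P : MvPolynomial (Fin 2) ℝ × MvPolynomial (Fin 2) ℝ)
    (f : MvPolynomial (Fin 2) ℝ) : MvPolynomial (Fin 2) ℝ :=
  P.1 * pderiv 0 f + P.2 * pderiv 1 f

/-- The Lie bracket of two planar polynomial vector fields:
`[P,Q] = (P(Q1) − Q(P1), P(Q2) − Q(P2))`. -/
noncomputable def lieVF (P Q : MvPolynomial (Fin 2) ℝ × MvPolynomial (Fin 2) ℝ) :
    MvPolynomial (Fin 2) ℝ × MvPolynomial (Fin 2) ℝ :=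
  (applyVF P Q.1 - applyVF Q P.1, applyVF P Q.2 - applyVF Q P.2)

/-- The Euler vector field `E_γ = (γ1·x1, γ2·x2)`. -/
noncomputable def eulerVF (γ1 γ2 : ℕ) : MvPolynomial (Fin 2) ℝ × MvPolynomial (Fin 2) ℝ :=
  ((γ1 : ℝ) • X 0, (γ2 : ℝ) • X 1)

/-- The Hamiltonian vector field `(−∂H/∂x2, ∂H/∂x1)` of a polynomial `H`. -/
noncomputable def hamVF (H : MvPolynomial (Fin 2) ℝ) :
    MvPolynomial (Fin 2) ℝ × MvPolynomial (Fin 2) ℝ :=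
  (-(pderiv 1 H), pderiv 0 H)

/-- Multiplication of a planar vector field by a scalar polynomial. -/
noncomputable def smulVF (J : MvPolynomial (Fin 2) ℝ)
    (P : MvPolynomial (Fin 2) ℝ × MvPolynomial (Fin 2) ℝ) :
    MvPolynomial (Fin 2) ℝ × MvPolynomial (Fin 2) ℝ :=
  (J * P.1, J * P.2)

/-- The divergence `∂P1/∂x1 + ∂P2/∂x2` of a planar polynomial vector field. -/
noncomputable def divVF (P : MvPolynomial (Fin 2) ℝ × MvPolynomial (Fin 2) ℝ) :
    MvPolynomial (Fin 2) ℝ :=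
  pderiv 0 P.1 + pderiv 1 P.2

/-!
The bracket is a derivation in its second argument, so `[𝓗, J·E_γ] = 𝓗(J)·E_γ + J·[𝓗, E_γ]`,
and the first term vanishes. The partial derivatives `∂H/∂x1`, `∂H/∂x2` are quasi-homogeneous of
g.d. `χ + γ2`, `χ + γ1`, so Euler's identity `E_γ(f) = deg f · f` applied to them gives
`[𝓗, E_γ] = −χ·𝓗`. Finally `𝓗(K) = 0` because `(−∂K/∂x2, ∂K/∂x1)` is a polynomial multiple
of `𝓗`, and `𝓗(K)` is the determinant of `𝓗` and that field.
-/

variable {f g K H : MvPolynomial (Fin 2) ℝ}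
  {P Q : MvPolynomial (Fin 2) ℝ × MvPolynomial (Fin 2) ℝ}

lemma zero_smulVF : smulVF 0 P = 0 := by
  simp [smulVF]

lemma smulVF_smul (c : ℝ) : smulVF f (c • P) = c • smulVF f P := by
  simp [smulVF]

lemma smul_smulVF (c : ℝ) : c • smulVF f P = smulVF (c • f) P := by
  simp [smulVF]

lemma lieVF_smulVF_right :
    lieVF P (smulVF f Q) = smulVF (applyVF P f) Q + smulVF f (lieVF P Q) := by
  simp only [lieVF, applyVF, smulVF, pderiv_mul, Prod.mk_add_mk, Prod.mk.injEq]
  constructor <;> ring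

lemma applyVF_eulerVF_of_isWeightedHomogeneous {γ1 γ2 n : ℕ}
    (hf : f.IsWeightedHomogeneous ![γ1, γ2] n) : applyVF (eulerVF γ1 γ2) f = (n : ℝ) • f := by
  have euler := hf.sum_weight_X_mul_pderiv
  simp only [Fin.sum_univ_two, Matrix.cons_val_zero, Matrix.cons_val_one,
    ← Nat.cast_smul_eq_nsmul ℝ] at euler
  simpa [applyVF, eulerVF, smul_mul_assoc] using euler

lemma applyVF_neg : applyVF P (-f) = -applyVF P f := by
  simp only [applyVF, map_neg, mul_neg, neg_add]

lemma lieVF_hamVF_eulerVF {γ1 γ2 χ : ℕ}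
    (hH : H.IsWeightedHomogeneous ![γ1, γ2] (χ + (γ1 + γ2))) :
    lieVF (hamVF H) (eulerVF γ1 γ2) = (-(χ : ℝ)) • hamVF H := by
  have h0 : applyVF (eulerVF γ1 γ2) (pderiv 0 H) = ((χ + γ2 : ℕ) : ℝ) • pderiv 0 H :=
    applyVF_eulerVF_of_isWeightedHomogeneous
      (hH.pderiv (by simp only [Matrix.cons_val_zero]; ring))
  have h1 : applyVF (eulerVF γ1 γ2) (pderiv 1 H) = ((χ + γ1 : ℕ) : ℝ) • pderiv 1 H :=
    applyVF_eulerVF_of_isWeightedHomogeneous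
      (hH.pderiv (by simp only [Matrix.cons_val_one, Matrix.cons_val_fin_one]; ring))
  rw [lieVF, hamVF, applyVF_neg, h0, h1]
  simp only [applyVF, eulerVF, Derivation.map_smul, pderiv_X_self, pderiv_X_of_ne one_ne_zero,
    pderiv_X_of_ne zero_ne_one, smul_zero, mul_smul_comm, mul_one, mul_zero, add_zero, zero_add,
    Prod.smul_mk, Prod.mk.injEq]
  push_cast
  constructor <;> module

lemma applyVF_eq_zero_of_hamVF_eq_smulVF (hK : hamVF K = smulVF g P) : applyVF P K = 0 := by
  simp only [hamVF, smulVF, Prod.mk.injEq] at hK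
  rw [applyVF, hK.2, ← neg_neg (pderiv 1 K), hK.1]
  ring

theorem lie_ham_smul_euler_integral_general (γ1 γ2 : ℕ)
    (χ : ℕ)
    (H : MvPolynomial (Fin 2) ℝ)
    (hH : H.IsWeightedHomogeneous ![γ1, γ2] (χ + (γ1 + γ2)))
    (J : MvPolynomial (Fin 2) ℝ)
    (hint : applyVF (hamVF H) J = 0)
    (K : MvPolynomial (Fin 2) ℝ)
    (hKeq : lieVF (hamVF H) (smulVF J (eulerVF γ1 γ2)) = hamVF K) :
    lieVF (hamVF H) (smulVF J (eulerVF γ1 γ2)) = (-(χ : ℝ)) • smulVF J (hamVF H) ∧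
    hamVF K = (-(χ : ℝ)) • smulVF J (hamVF H) ∧
    applyVF (hamVF H) K = 0 := by
  have hbracket :
      lieVF (hamVF H) (smulVF J (eulerVF γ1 γ2)) = (-(χ : ℝ)) • smulVF J (hamVF H) := by
    rw [lieVF_smulVF_right, hint, zero_smulVF, zero_add, lieVF_hamVF_eulerVF hH, smulVF_smul]
  have hK : hamVF K = (-(χ : ℝ)) • smulVF J (hamVF H) := hKeq ▸ hbracket
  exact ⟨hbracket, hK, applyVF_eq_zero_of_hamVF_eq_smulVF (hK.trans (smul_smulVF _))⟩

/-- **Lemma 2, part 1, special case.** Let `γ=(γ1,γ2)` be a weight, `δ=γ1+γ2`,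
`H` quasi-homogeneous of g.d. `χ+δ`, `𝓗 = (−∂H/∂x2, ∂H/∂x1)`, and `J` quasi-homogeneous of
g.d. `k` with `𝓗(J) = 0`. Then `[𝓗, J·E_γ] = −χ·J·𝓗`; that is, the quasi-homogeneous
polynomial `K` of g.d. `k+χ+δ` with `[𝓗, J·E_γ] = (−∂K/∂x2, ∂K/∂x1)` satisfies
`(−∂K/∂x2, ∂K/∂x1) = −χ·J·𝓗`, and moreover `𝓗(K) = 0`. -/
theorem lie_ham_smul_euler_integral (γ1 γ2 : ℕ) (hγ1 : 0 < γ1) (hγ2 : 0 < γ2)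
    (hcop : Nat.Coprime γ1 γ2) (χ k : ℕ)
    (H : MvPolynomial (Fin 2) ℝ)
    (hH : H.IsWeightedHomogeneous ![γ1, γ2] (χ + (γ1 + γ2)))
    (J : MvPolynomial (Fin 2) ℝ) (hJ : J.IsWeightedHomogeneous ![γ1, γ2] k)
    (hint : applyVF (hamVF H) J = 0)
    (K : MvPolynomial (Fin 2) ℝ)
    (hK : K.IsWeightedHomogeneous ![γ1, γ2] (k + χ + (γ1 + γ2)))
    (hKeq : lieVF (hamVF H) (smulVF J (eulerVF γ1 γ2)) = hamVF K) :
    lieVF (hamVF H) (smulVF J (eulerVF γ1 γ2)) = (-(χ : ℝ)) • smulVF J (hamVF H) ∧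
    hamVF K = (-(χ : ℝ)) • smulVF J (hamVF H) ∧
    applyVF (hamVF H) K = 0 :=
  lie_ham_smul_euler_integral_general γ1 γ2 χ H hH J hint K hKeq
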